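/- Let x ∈ ℝ^{np} be k-block-sparse, let y = Ax + w with ‖A^T w‖_{b∞} ≤ μ, and let x̂ be a minimizer of ‖z‖_{b1} over all z with ‖A^T(y − Az)‖_{b∞} ≤ μ (the Block-Sparse Dantzig selector). If ω_{b∞}(A^T A,2k) > 0, then ‖x̂ − x‖_{b∞} ≤ 2μ/ω_{b∞}(A^T A,2k). -/

import Mathlib

open MeasureTheory ProbabilityTheory Finset Matrix

/-- Euclidean norm of a finitely-indexed real vector. -/
noncomputable def vnorm {ι : Type*} [Fintype ι] (v : ι → ℝ) : ℝ :=
  Real.sqrt (∑ i, (v i) ^ 2)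

/-- Euclidean norm of the `i`-th block of `x ∈ ℝ^{np}` (blocks indexed by `Fin p`). -/
noncomputable def bnorm {n p : ℕ} (x : Fin p × Fin n → ℝ) (i : Fin p) : ℝ :=
  vnorm (fun j => x (i, j))

/-- Block-ℓ1 norm: `‖x‖_{b1} = ∑ i, ‖x_i‖₂`. -/
noncomputable def bl1 {n p : ℕ} (x : Fin p × Fin n → ℝ) : ℝ :=
  ∑ i, bnorm x i

/-- Block-ℓ∞ norm: `‖x‖_{b∞} = max_i ‖x_i‖₂`. -/
noncomputable def blinf {n p : ℕ} (x : Fin p × Fin n → ℝ) : ℝ :=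
  ⨆ i, bnorm x i

open scoped Classical in
/-- Block support: indices of nonzero blocks. -/
noncomputable def bsupp {n p : ℕ} (x : Fin p × Fin n → ℝ) : Finset (Fin p) :=
  Finset.univ.filter (fun i => ∃ j, x (i, j) ≠ 0)

/-- `ω₂(A,s) = inf { ‖Az‖₂ / ‖z‖_{b∞} : z ≠ 0, ‖z‖_{b1} ≤ s ‖z‖_{b∞} }`. -/
noncomputable def omega2 {m n p : ℕ} (A : Matrix (Fin m) (Fin p × Fin n) ℝ) (s : ℝ) : ℝ :=
  sInf {r | ∃ z : Fin p × Fin n → ℝ, z ≠ 0 ∧ bl1 z ≤ s * blinf z ∧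
    r = vnorm (A.mulVec z) / blinf z}

/-- `ω_{b∞}(AᵀA,s) = inf { ‖AᵀAz‖_{b∞} / ‖z‖_{b∞} : z ≠ 0, ‖z‖_{b1} ≤ s ‖z‖_{b∞} }`. -/
noncomputable def omegaBInf {m n p : ℕ} (A : Matrix (Fin m) (Fin p × Fin n) ℝ) (s : ℝ) : ℝ :=
  sInf {r | ∃ z : Fin p × Fin n → ℝ, z ≠ 0 ∧ bl1 z ≤ s * blinf z ∧
    r = blinf ((Aᵀ * A).mulVec z) / blinf z}

/-- Block ℓ1-constrained minimal singular value
`ρ_s(A) = inf { ‖Az‖₂ / ‖z‖₂ : z ≠ 0, ‖z‖_{b1}² ≤ s ‖z‖₂² }`. -/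
noncomputable def rhoCMSV {m n p : ℕ} (A : Matrix (Fin m) (Fin p × Fin n) ℝ) (s : ℝ) : ℝ :=
  sInf {r | ∃ z : Fin p × Fin n → ℝ, z ≠ 0 ∧ (bl1 z) ^ 2 ≤ s * (vnorm z) ^ 2 ∧
    r = vnorm (A.mulVec z) / vnorm z}

/-- Spectral norm (largest singular value) of a real matrix, as the ℓ2→ℓ2 operator norm. -/
noncomputable def specNorm {ι κ : Type*} [Fintype ι] [Fintype κ] (M : Matrix ι κ ℝ) : ℝ :=
  sSup {r | ∃ v : κ → ℝ, vnorm v ≤ 1 ∧ r = vnorm (M.mulVec v)}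

/-- The `j`-th column block (of `n` columns) of a matrix with `np` columns. -/
def colBlock {ι : Type*} {n p : ℕ} (Q : Matrix ι (Fin p × Fin n) ℝ) (j : Fin p) :
    Matrix ι (Fin n) ℝ := Matrix.of fun r c => Q r (j, c)

/-- The `l`-th row block (of `n` rows) of a matrix with `np` rows. -/
def rowBlock {κ : Type*} {n p : ℕ} (P : Matrix (Fin p × Fin n) κ ℝ) (l : Fin p) :
    Matrix (Fin n) κ ℝ := Matrix.of fun r c => P (l, r) c

/-- `δ_{ij} Iₙ`. -/
def deltaId (n : ℕ) {p : ℕ} (i j : Fin p) : Matrix (Fin n) (Fin n) ℝ :=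
  if i = j then 1 else 0

/-- Orlicz ψ₂ norm of a scalar random variable. -/
noncomputable def psi2 {Ω : Type*} [MeasurableSpace Ω] (μ : Measure Ω) (Y : Ω → ℝ) : ℝ :=
  sInf {t | 0 < t ∧ ∫ ω, Real.exp ((Y ω) ^ 2 / t ^ 2) ∂μ ≤ 2}

/-!
The true signal `x` is feasible, since `Aᵀ(y - Ax) = Aᵀw`; so minimality gives
`‖x̂‖_{b1} ≤ ‖x‖_{b1}`, and comparing blocks on and off the block support of `x` puts the error
`h = x̂ - x` in the cone `‖h‖_{b1} ≤ 2k ‖h‖_{b∞}`. As both `x` and `x̂` are feasible,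
`‖AᵀAh‖_{b∞} ≤ 2μ`, and on that cone `ω_{b∞}(AᵀA, 2k) ‖h‖_{b∞} ≤ ‖AᵀAh‖_{b∞}` by definition.
-/

section

variable {m n p : ℕ}

lemma bnorm_eq_norm (x : Fin p × Fin n → ℝ) (i : Fin p) :
    bnorm x i = ‖(WithLp.toLp 2 fun j => x (i, j) : EuclideanSpace ℝ (Fin n))‖ := by
  simp [bnorm, vnorm, EuclideanSpace.norm_eq]

lemma bnorm_nonneg (x : Fin p × Fin n → ℝ) (i : Fin p) : 0 ≤ bnorm x i :=
  Real.sqrt_nonneg _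

lemma bnorm_sub_le (x z : Fin p × Fin n → ℝ) (i : Fin p) :
    bnorm (x - z) i ≤ bnorm x i + bnorm z i := by
  simp only [bnorm_eq_norm]
  exact norm_sub_le (WithLp.toLp 2 fun j => x (i, j) : EuclideanSpace ℝ (Fin n))
    (WithLp.toLp 2 fun j => z (i, j))

lemma bnorm_le_bnorm_add_bnorm_sub (x z : Fin p × Fin n → ℝ) (i : Fin p) :
    bnorm x i ≤ bnorm z i + bnorm (z - x) i := by
  simp only [bnorm_eq_norm]
  exact norm_le_norm_add_norm_sub _ _

lemma bnorm_pos_of_ne_zero {x : Fin p × Fin n → ℝ} {i : Fin p} {j : Fin n}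
    (hx : x (i, j) ≠ 0) : 0 < bnorm x i := by
  rw [bnorm_eq_norm, norm_pos_iff]
  intro h
  exact hx (congrFun (congrArg WithLp.ofLp h) j)

lemma bnorm_le_blinf (x : Fin p × Fin n → ℝ) (i : Fin p) : bnorm x i ≤ blinf x :=
  le_ciSup (Set.finite_range _).bddAbove i

lemma blinf_nonneg (x : Fin p × Fin n → ℝ) : 0 ≤ blinf x :=
  Real.iSup_nonneg (bnorm_nonneg x)

lemma blinf_sub_le (x z : Fin p × Fin n → ℝ) : blinf (x - z) ≤ blinf x + blinf z :=
  Real.iSup_le (fun i => (bnorm_sub_le x z i).trans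
    (add_le_add (bnorm_le_blinf x i) (bnorm_le_blinf z i)))
    (add_nonneg (blinf_nonneg x) (blinf_nonneg z))

lemma blinf_eq_zero_iff {x : Fin p × Fin n → ℝ} : blinf x = 0 ↔ x = 0 := by
  refine ⟨fun h => funext fun ij => ?_, fun h => ?_⟩
  · by_contra hx
    exact (bnorm_pos_of_ne_zero hx).not_ge (h ▸ bnorm_le_blinf x ij.1)
  · simp [h, blinf, bnorm, vnorm]

lemma sum_bnorm_le_card_mul_blinf (x : Fin p × Fin n → ℝ) (T : Finset (Fin p)) :
    ∑ i ∈ T, bnorm x i ≤ T.card * blinf x := by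
  simpa using Finset.sum_le_card_nsmul T _ _ fun i _ => bnorm_le_blinf x i

lemma bnorm_eq_zero_of_notMem_bsupp {x : Fin p × Fin n → ℝ} {i : Fin p}
    (hi : i ∉ bsupp x) : bnorm x i = 0 := by
  have hx : ∀ j, x (i, j) = 0 := by simpa [bsupp] using hi
  simp [bnorm, vnorm, hx]

lemma bnorm_sub_of_notMem_bsupp (z : Fin p × Fin n → ℝ) {x : Fin p × Fin n → ℝ}
    {i : Fin p} (hi : i ∉ bsupp x) : bnorm (z - x) i = bnorm z i := by
  have hx : ∀ j, x (i, j) = 0 := by simpa [bsupp] using hi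
  simp [bnorm, hx]

lemma bl1_eq_sum_bsupp (x : Fin p × Fin n → ℝ) :
    bl1 x = ∑ i ∈ bsupp x, bnorm x i :=
  (Finset.sum_subset (Finset.subset_univ _)
    fun _ _ hi => bnorm_eq_zero_of_notMem_bsupp hi).symm

lemma sum_compl_bsupp_bnorm_sub_le {x z : Fin p × Fin n → ℝ} (h : bl1 z ≤ bl1 x) :
    ∑ i ∈ (bsupp x)ᶜ, bnorm (z - x) i ≤ ∑ i ∈ bsupp x, bnorm (z - x) i := by
  set T := bsupp x
  have hz : bl1 z = ∑ i ∈ T, bnorm z i + ∑ i ∈ Tᶜ, bnorm (z - x) i := by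
    rw [bl1, ← Finset.sum_add_sum_compl T]
    congr 1
    exact Finset.sum_congr rfl fun i hi =>
      (bnorm_sub_of_notMem_bsupp z (Finset.mem_compl.mp hi)).symm
  have hT : ∑ i ∈ T, bnorm x i ≤ ∑ i ∈ T, bnorm z i + ∑ i ∈ T, bnorm (z - x) i := by
    rw [← Finset.sum_add_distrib]
    exact Finset.sum_le_sum fun i _ => bnorm_le_bnorm_add_bnorm_sub x z i
  linarith [bl1_eq_sum_bsupp x]

lemma bl1_sub_le_two_mul_card_bsupp_mul_blinf {x z : Fin p × Fin n → ℝ}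
    (h : bl1 z ≤ bl1 x) : bl1 (z - x) ≤ 2 * (bsupp x).card * blinf (z - x) := by
  have hsplit := Finset.sum_add_sum_compl (bsupp x) fun i => bnorm (z - x) i
  rw [← bl1] at hsplit
  linarith [sum_compl_bsupp_bnorm_sub_le h, sum_bnorm_le_card_mul_blinf (z - x) (bsupp x)]

lemma omegaBInf_le (A : Matrix (Fin m) (Fin p × Fin n) ℝ) {s : ℝ}
    {z : Fin p × Fin n → ℝ} (hz : z ≠ 0) (hcone : bl1 z ≤ s * blinf z) :
    omegaBInf A s ≤ blinf ((Aᵀ * A) *ᵥ z) / blinf z := by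
  refine csInf_le ⟨0, ?_⟩ ⟨z, hz, hcone, rfl⟩
  rintro _ ⟨v, -, -, rfl⟩
  exact div_nonneg (blinf_nonneg _) (blinf_nonneg _)

lemma blinf_le_div_omegaBInf (A : Matrix (Fin m) (Fin p × Fin n) ℝ) {s : ℝ}
    (hω : 0 < omegaBInf A s) {z : Fin p × Fin n → ℝ} (hcone : bl1 z ≤ s * blinf z) :
    blinf z ≤ blinf ((Aᵀ * A) *ᵥ z) / omegaBInf A s := by
  rcases eq_or_ne z 0 with rfl | hz
  · rw [blinf_eq_zero_iff.mpr rfl]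
    exact div_nonneg (blinf_nonneg _) hω.le
  · have hpos : 0 < blinf z := (blinf_nonneg z).lt_of_ne' (blinf_eq_zero_iff.not.mpr hz)
    rw [le_div_iff₀ hω, mul_comm, ← le_div_iff₀ hpos]
    exact omegaBInf_le A hz hcone

lemma blinf_gram_mulVec_sub_le (A : Matrix (Fin m) (Fin p × Fin n) ℝ)
    (y : Fin m → ℝ) (u v : Fin p × Fin n → ℝ) :
    blinf ((Aᵀ * A) *ᵥ (u - v)) ≤ blinf (Aᵀ *ᵥ (y - A *ᵥ v)) + blinf (Aᵀ *ᵥ (y - A *ᵥ u)) := by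
  have h : (Aᵀ * A) *ᵥ (u - v) = Aᵀ *ᵥ (y - A *ᵥ v) - Aᵀ *ᵥ (y - A *ᵥ u) := by
    rw [← Matrix.mulVec_mulVec, ← Matrix.mulVec_sub, Matrix.mulVec_sub A]
    congr 1
    abel
  exact h ▸ blinf_sub_le _ _

end

/-- Theorem 1, BS-DS: `‖x̂ - x‖_{b∞} ≤ 2μ / ω_{b∞}(AᵀA, 2k)`. -/
theorem stmt6 {m n p k : ℕ} (A : Matrix (Fin m) (Fin p × Fin n) ℝ)
    (x : Fin p × Fin n → ℝ) (w y : Fin m → ℝ) (xhat : Fin p × Fin n → ℝ) (μ : ℝ)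
    (hsparse : (bsupp x).card ≤ k)
    (hy : y = A.mulVec x + w)
    (hw : blinf (Aᵀ.mulVec w) ≤ μ)
    (hfeas : blinf (Aᵀ.mulVec (y - A.mulVec xhat)) ≤ μ)
    (hmin : ∀ z : Fin p × Fin n → ℝ,
      blinf (Aᵀ.mulVec (y - A.mulVec z)) ≤ μ → bl1 xhat ≤ bl1 z)
    (hω : 0 < omegaBInf A (2 * k)) :
    blinf (xhat - x) ≤ 2 * μ / omegaBInf A (2 * k) := by
  have hx_feas : blinf (Aᵀ *ᵥ (y - A *ᵥ x)) ≤ μ := by simpa [hy] using hw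
  have hcone : bl1 (xhat - x) ≤ 2 * k * blinf (xhat - x) := by
    refine (bl1_sub_le_two_mul_card_bsupp_mul_blinf (hmin x hx_feas)).trans ?_
    gcongr
    exact blinf_nonneg _
  calc blinf (xhat - x) ≤ blinf ((Aᵀ * A) *ᵥ (xhat - x)) / omegaBInf A (2 * k) :=
        blinf_le_div_omegaBInf A hω hcone
    _ ≤ 2 * μ / omegaBInf A (2 * k) := by
        gcongr
        linarith [blinf_gram_mulVec_sub_le A y xhat x]
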